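/- Let x and y be words using only the two letters i and i+1. Then u_x(λ) = u_y(λ) for all partitions λ if and only if x and y are Knuth equivalent. -/

import Mathlib

/-! On a word in the letters `i` and `i + 1` the Schur operators only change columns `i` and
`i + 1`, and, reading the word from the right, they succeed as long as columns `i - 1`, `i`,
`i + 1` stay weakly decreasing. So `u_x λ` depends on `x` only through the numbers `m`, `n` of
letters `i`, `i + 1` and through `alpha i x`, the largest excess of letters `i + 1` over letters `i`
in a suffix of `x`.

The two Knuth moves on these letters, `(i+1) i (i+1) ↔ (i+1) (i+1) i` and
`i (i+1) i ↔ (i+1) i i`, exchange words with the same three invariants, so they hold as relations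
between Schur operators.
Conversely, a partition with long columns before column `i` and an empty column `i + 1` reads the
invariants off `u_x`, and they determine a normal form to which `x` is Knuth equivalent.
-/

/-- A partition, represented by its column lengths (the conjugate):
`c i` is the number of boxes in column `i`. -/
def IsPartition (c : ℕ+ → ℕ) : Prop :=
  (∀ i : ℕ+, c (i + 1) ≤ c i) ∧ ∃ N : ℕ+, ∀ i : ℕ+, N ≤ i → c i = 0

open Classical in
/-- The Schur operator `u_i`: add a box to column `i` if the result is a
partition, else `none` (representing `0`). -/
noncomputable def addBox (i : ℕ+) (c : ℕ+ → ℕ) : Option (ℕ+ → ℕ) :=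
  if IsPartition (Function.update c i (c i + 1)) then
    some (Function.update c i (c i + 1))
  else none

/-- `u_x = u_{x_1} ∘ ⋯ ∘ u_{x_l}` for a word `x = x_1 ⋯ x_l`. -/
noncomputable def schurWord (x : List ℕ+) (c : ℕ+ → ℕ) : Option (ℕ+ → ℕ) :=
  x.foldr (fun i o => o.bind (addBox i)) (some c)

/-- `α_i(x)`: the maximum over suffixes `s` of `x` of `w_{i+1}(s) - w_i(s)`. -/
def alpha (i : ℕ+) (x : List ℕ+) : ℕ :=
  (x.tails.map (fun s => s.count (i + 1) - s.count i)).foldr max 0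

/-- An elementary Knuth move on consecutive subwords:
`bac ↔ bca` for `a < b ≤ c`, and `acb ↔ cab` for `a ≤ b < c`. -/
inductive KnuthStep : List ℕ+ → List ℕ+ → Prop
  | k1 (p s : List ℕ+) (a b c : ℕ+) (h1 : a < b) (h2 : b ≤ c) :
      KnuthStep (p ++ [b, a, c] ++ s) (p ++ [b, c, a] ++ s)
  | k2 (p s : List ℕ+) (a b c : ℕ+) (h1 : a ≤ b) (h2 : b < c) :
      KnuthStep (p ++ [a, c, b] ++ s) (p ++ [c, a, b] ++ s)

/-- Knuth equivalence of words. -/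
def KnuthEquiv : List ℕ+ → List ℕ+ → Prop := Relation.EqvGen KnuthStep

open Function

namespace PNat

@[simp] lemma self_ne_add_one (i : ℕ+) : i ≠ i + 1 := (PNat.lt_add_right i 1).ne

@[simp] lemma add_one_ne_self (i : ℕ+) : i + 1 ≠ i := (self_ne_add_one i).symm

lemma eq_and_eq_add_one_of_lt {i a b : ℕ+} (hab : a < b) (ha : a = i ∨ a = i + 1)
    (hb : b = i ∨ b = i + 1) : a = i ∧ b = i + 1 := by
  have := PNat.lt_add_right i 1
  rcases ha with rfl | rfl <;> rcases hb with rfl | rfl <;>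
    first | exact ⟨rfl, rfl⟩ | exact absurd hab (lt_irrefl _) | exact absurd hab this.not_gt

end PNat

section SchurOperators

variable {c d : ℕ+ → ℕ}

lemma isPartition_update_iff (hc : IsPartition c) (i : ℕ+) :
    IsPartition (update c i (c i + 1)) ↔ ∀ j : ℕ+, i = j + 1 → c i < c j := by
  constructor
  · rintro ⟨hanti, -⟩ j rfl
    simpa using hanti j
  · intro h
    refine ⟨fun j => ?_, ?_⟩
    · by_cases hj : j + 1 = i
      · subst hj; simpa using h j rfl
      · by_cases hji : j = i
        · subst hji; simpa [hj] using (hc.1 j).trans (Nat.le_succ _)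
        · simpa [update_apply, hj, hji] using hc.1 j
    · obtain ⟨N, hN⟩ := hc.2
      refine ⟨N + i, fun j hj => ?_⟩
      rw [update_of_ne (PNat.lt_add_left i N |>.trans_le hj).ne']
      exact hN j ((PNat.lt_add_right N i).le.trans hj)

open Classical in
lemma addBox_of_isPartition (hc : IsPartition c) (i : ℕ+) :
    addBox i c =
      if ∀ j : ℕ+, i = j + 1 → c i < c j then some (update c i (c i + 1)) else none :=
  if_congr (isPartition_update_iff hc i) rfl rfl

lemma IsPartition.of_addBox_eq_some {i : ℕ+} (h : addBox i c = some d) : IsPartition d := by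
  unfold addBox at h
  split_ifs at h with hp
  exact Option.some.inj h ▸ hp

lemma schurWord_nil (c : ℕ+ → ℕ) : schurWord [] c = some c := rfl

lemma schurWord_cons (a : ℕ+) (x : List ℕ+) (c : ℕ+ → ℕ) :
    schurWord (a :: x) c = (schurWord x c).bind (addBox a) := rfl

lemma schurWord_append (p q : List ℕ+) (c : ℕ+ → ℕ) :
    schurWord (p ++ q) c = (schurWord q c).bind (schurWord p) := by
  induction p with
  | nil => exact (Option.bind_fun_some _).symm
  | cons a p ih => rw [List.cons_append, schurWord_cons, ih, Option.bind_assoc]; rfl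

lemma IsPartition.of_schurWord_eq_some {x : List ℕ+} (hc : IsPartition c)
    (h : schurWord x c = some d) : IsPartition d := by
  cases x with
  | nil => exact Option.some.inj h ▸ hc
  | cons a x =>
    obtain ⟨_, -, hd⟩ := Option.bind_eq_some_iff.mp h
    exact .of_addBox_eq_some hd

lemma schurWord_append_append_congr {w w' : List ℕ+}
    (h : ∀ d, IsPartition d → schurWord w d = schurWord w' d) (p s : List ℕ+)
    (hc : IsPartition c) : schurWord (p ++ w ++ s) c = schurWord (p ++ w' ++ s) c := by
  simp only [List.append_assoc, schurWord_append p, schurWord_append _ s]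
  congr 1
  cases hs : schurWord s c with
  | none => rfl
  | some d => exact h d (hc.of_schurWord_eq_some hs)

end SchurOperators

section Alpha

variable (i : ℕ+)

lemma alpha_nil : alpha i [] = 0 := rfl

lemma alpha_cons (a : ℕ+) (r : List ℕ+) :
    alpha i (a :: r) = max ((a :: r).count (i + 1) - (a :: r).count i) (alpha i r) := by
  simp [alpha]

lemma count_sub_count_le_alpha (x : List ℕ+) : x.count (i + 1) - x.count i ≤ alpha i x := by
  cases x with
  | nil => simp
  | cons a r => exact (alpha_cons i a r).ge.trans' (le_max_left _ _)

lemma alpha_le_alpha_cons (a : ℕ+) (r : List ℕ+) : alpha i r ≤ alpha i (a :: r) :=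
  (alpha_cons i a r).ge.trans' (le_max_right _ _)

lemma alpha_cons_self (r : List ℕ+) : alpha i (i :: r) = alpha i r := by
  have := count_sub_count_le_alpha i r
  rw [alpha_cons]
  simp only [List.count_cons_self, List.count_cons, beq_iff_eq, PNat.self_ne_add_one,
    if_false, add_zero]
  omega

lemma alpha_cons_add_one (r : List ℕ+) :
    alpha i ((i + 1) :: r) = max (r.count (i + 1) + 1 - r.count i) (alpha i r) := by
  rw [alpha_cons]
  simp

lemma alpha_le_count (x : List ℕ+) : alpha i x ≤ x.count (i + 1) := by
  induction x with
  | nil => exact le_rfl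
  | cons a r ih =>
    rw [alpha_cons]
    exact max_le (Nat.sub_le _ _) (ih.trans (List.count_le_count_cons ..))

lemma alpha_append_add_one (r : List ℕ+) : alpha i (r ++ [i + 1]) = alpha i r + 1 := by
  induction r with
  | nil => simp [alpha]
  | cons a r ih =>
    rw [List.cons_append, alpha_cons, ih, alpha_cons]
    simp only [List.count_cons, List.count_append, List.count_nil, beq_iff_eq, beq_self_eq_true,
      PNat.add_one_ne_self, if_true, if_false]
    omega

lemma alpha_append_self (r : List ℕ+) : alpha i (r ++ [i]) = alpha i r - 1 := by
  induction r with
  | nil => simp [alpha]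
  | cons a r ih =>
    rw [List.cons_append, alpha_cons, ih, alpha_cons]
    simp only [List.count_cons, List.count_append, List.count_nil, beq_iff_eq, beq_self_eq_true,
      PNat.self_ne_add_one, if_true, if_false]
    omega

end Alpha

section TwoLetterWords

open Classical

variable {c : ℕ+ → ℕ} {i : ℕ+}

def addToColumns (c : ℕ+ → ℕ) (i : ℕ+) (m n : ℕ) : ℕ+ → ℕ :=
  update (update c i (c i + m)) (i + 1) (c (i + 1) + n)

@[simp] lemma addToColumns_self (m n : ℕ) : addToColumns c i m n i = c i + m := by
  simp [addToColumns]

@[simp] lemma addToColumns_add_one (m n : ℕ) : addToColumns c i m n (i + 1) = c (i + 1) + n := by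
  simp [addToColumns]

lemma addToColumns_of_ne {j : ℕ+} (hi : j ≠ i) (hi' : j ≠ i + 1) (m n : ℕ) :
    addToColumns c i m n j = c j := by
  simp [addToColumns, hi, hi']

lemma addToColumns_of_eq_add_one {j : ℕ+} (hj : i = j + 1) (m n : ℕ) :
    addToColumns c i m n j = c j := by
  have hji : j < i := hj ▸ PNat.lt_add_right j 1
  exact addToColumns_of_ne hji.ne (hji.trans (PNat.lt_add_right i 1)).ne m n

lemma addBox_addToColumns_self {m n : ℕ} (hd : IsPartition (addToColumns c i m n)) :
    addBox i (addToColumns c i m n) =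
      if ∀ j : ℕ+, i = j + 1 → c i + m < c j then some (addToColumns c i (m + 1) n)
      else none := by
  rw [addBox_of_isPartition hd]
  refine if_congr (forall₂_congr fun j hj => ?_) (congrArg some ?_) rfl
  · rw [addToColumns_self, addToColumns_of_eq_add_one hj]
  · ext j
    by_cases hj : j = i
    · subst hj; simp [add_assoc]
    · by_cases hj' : j = i + 1
      · subst hj'; simp
      · simp [update_of_ne hj, addToColumns_of_ne hj hj']

lemma addBox_addToColumns_add_one {m n : ℕ} (hd : IsPartition (addToColumns c i m n)) :
    addBox (i + 1) (addToColumns c i m n) =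
      if c (i + 1) + n < c i + m then some (addToColumns c i m (n + 1)) else none := by
  rw [addBox_of_isPartition hd]
  refine if_congr ?_ (congrArg some ?_) rfl
  · refine ⟨fun h => ?_, fun h j hj => ?_⟩
    · simpa using h i rfl
    · obtain rfl := add_right_cancel hj
      simpa using h
  · ext j
    by_cases hj : j = i + 1
    · subst hj; simp [add_assoc]
    · by_cases hj' : j = i
      · subst hj'; simp
      · simp [update_of_ne hj, addToColumns_of_ne hj' hj]

theorem schurWord_eq_ite {x : List ℕ+} (hc : IsPartition c)
    (hx : ∀ a ∈ x, a = i ∨ a = i + 1) :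
    schurWord x c =
      if alpha i x + c (i + 1) ≤ c i ∧ ∀ j : ℕ+, i = j + 1 → c i + x.count i ≤ c j then
        some (addToColumns c i (x.count i) (x.count (i + 1)))
      else none := by
  induction x with
  | nil =>
    have h₀ : addToColumns c i 0 0 = c := by ext j; simp [addToColumns]
    simp only [schurWord_nil, alpha_nil, List.count_nil, h₀, add_zero, zero_add, hc.1 i, true_and]
    rw [if_pos]
    rintro j rfl
    exact hc.1 j
  | cons a r ih =>
    have hr' := ih fun b hb => hx b (List.mem_cons_of_mem a hb)
    rw [schurWord_cons, hr']
    by_cases hr :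
      alpha i r + c (i + 1) ≤ c i ∧ ∀ j : ℕ+, i = j + 1 → c i + r.count i ≤ c j
    · have hd := hc.of_schurWord_eq_some (hr'.trans (if_pos hr))
      rw [if_pos hr, Option.bind_some]
      rcases hx a List.mem_cons_self with rfl | rfl
      · rw [addBox_addToColumns_self hd]
        refine if_congr ?_ (by simp) rfl
        simp only [alpha_cons_self, List.count_cons_self]
        exact ⟨fun h => ⟨hr.1, h⟩, fun h => h.2⟩
      · rw [addBox_addToColumns_add_one hd]
        refine if_congr ?_ (by simp) rfl
        rw [alpha_cons_add_one, List.count_cons_of_ne (PNat.add_one_ne_self i)]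
        have := hr.1
        exact ⟨fun h => ⟨by omega, hr.2⟩, fun h => by omega⟩
    · rw [if_neg hr, Option.bind_none, if_neg]
      rintro ⟨h₁, h₂⟩
      exact hr ⟨(Nat.add_le_add_right (alpha_le_alpha_cons i a r) _).trans h₁,
        fun j hj => (Nat.add_le_add_left (List.count_le_count_cons ..) _).trans (h₂ j hj)⟩

end TwoLetterWords

section Knuth

variable {i : ℕ+} {u v x : List ℕ+}

lemma KnuthStep.perm (h : KnuthStep u v) : u.Perm v := by
  cases h with
  | k1 p s a b c => exact ((List.Perm.swap c a []).cons b).append_left p |>.append_right s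
  | k2 p s a b c => exact ((List.Perm.swap c a []).append_right [b]).append_left p |>.append_right s

lemma KnuthEquiv.perm (h : KnuthEquiv u v) : u.Perm v := by
  induction h with
  | rel _ _ h => exact h.perm
  | refl => exact .refl _
  | symm _ _ _ ih => exact ih.symm
  | trans _ _ _ _ _ ih₁ ih₂ => exact ih₁.trans ih₂

lemma KnuthStep.append (h : KnuthStep u v) (p' s' : List ℕ+) :
    KnuthStep (p' ++ u ++ s') (p' ++ v ++ s') := by
  cases h with
  | k1 p s a b c h₁ h₂ => simpa using KnuthStep.k1 (p' ++ p) (s ++ s') a b c h₁ h₂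
  | k2 p s a b c h₁ h₂ => simpa using KnuthStep.k2 (p' ++ p) (s ++ s') a b c h₁ h₂

lemma KnuthEquiv.append (h : KnuthEquiv u v) (p s : List ℕ+) :
    KnuthEquiv (p ++ u ++ s) (p ++ v ++ s) := by
  induction h with
  | rel _ _ h => exact .rel _ _ (h.append p s)
  | refl => exact .refl _
  | symm _ _ _ ih => exact .symm _ _ ih
  | trans _ _ _ _ _ ih₁ ih₂ => exact .trans _ _ _ ih₁ ih₂

lemma schurWord_congr_of_perm_of_alpha_eq {c : ℕ+ → ℕ} {y : List ℕ+} (hc : IsPartition c)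
    (hx : ∀ a ∈ x, a = i ∨ a = i + 1) (hxy : x.Perm y) (hα : alpha i x = alpha i y) :
    schurWord x c = schurWord y c := by
  rw [schurWord_eq_ite hc hx, schurWord_eq_ite hc fun a ha => hx a (hxy.mem_iff.mpr ha), hα,
    hxy.count_eq, hxy.count_eq]

lemma KnuthStep.schurWord_eq {c : ℕ+ → ℕ} (h : KnuthStep u v)
    (hu : ∀ a ∈ u, a = i ∨ a = i + 1) (hc : IsPartition c) :
    schurWord u c = schurWord v c := by
  have hi := PNat.lt_add_right i 1
  cases h with
  | k1 p s a b c' hab hbc =>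
    obtain ⟨rfl, rfl⟩ := PNat.eq_and_eq_add_one_of_lt hab (hu a (by simp)) (hu b (by simp))
    obtain rfl : c' = a + 1 := (hu c' (by simp)).resolve_left (by rintro rfl; exact hbc.not_gt hi)
    refine schurWord_append_append_congr (fun d hd => ?_) p s hc
    refine schurWord_congr_of_perm_of_alpha_eq (i := a) hd (by simp)
      ((List.Perm.swap _ _ []).cons _) ?_
    simp [alpha]
  | k2 p s a b c' hab hbc =>
    obtain ⟨rfl, rfl⟩ := PNat.eq_and_eq_add_one_of_lt hbc (hu b (by simp)) (hu c' (by simp))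
    obtain rfl : a = b := (hu a (by simp)).resolve_right (by rintro rfl; exact hab.not_gt hi)
    refine schurWord_append_append_congr (fun d hd => ?_) p s hc
    refine schurWord_congr_of_perm_of_alpha_eq (i := a) hd (by simp)
      ((List.Perm.swap _ _ []).append_right _) ?_
    simp [alpha]

lemma KnuthEquiv.schurWord_eq {c : ℕ+ → ℕ} (h : KnuthEquiv u v)
    (hu : ∀ a ∈ u, a = i ∨ a = i + 1) (hc : IsPartition c) :
    schurWord u c = schurWord v c := by
  induction h with
  | rel _ _ h => exact h.schurWord_eq hu hc
  | refl => rfl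
  | symm _ _ h ih => exact (ih fun a ha => hu a ((KnuthEquiv.perm h).mem_iff.mp ha)).symm
  | trans _ _ _ h _ ih₁ ih₂ =>
    exact (ih₁ hu).trans (ih₂ fun a ha => hu a ((KnuthEquiv.perm h).mem_iff.mpr ha))

end Knuth

section NormalForm

lemma knuthEquiv_replicate_append_singleton (i : ℕ+) (b : ℕ) :
    KnuthEquiv (List.replicate (b + 1) (i + 1) ++ [i])
      ((i + 1) :: i :: List.replicate b (i + 1)) := by
  induction b with
  | zero => exact .refl _
  | succ b ih =>
    have hmove : KnuthEquiv _ _ := .rel _ _ <|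
      KnuthStep.k1 [] (List.replicate b (i + 1)) i (i + 1) (i + 1) (PNat.lt_add_right i 1) le_rfl
    have hih := ih.append [i + 1] []
    simp only [List.replicate_succ, List.cons_append, List.nil_append,
      List.append_nil] at hmove hih ⊢
    exact .trans _ _ _ hih (.symm _ _ hmove)

lemma knuthEquiv_replicate_replicate_append_singleton (i : ℕ+) (a b : ℕ) :
    KnuthEquiv (List.replicate a i ++ List.replicate (b + 1) (i + 1) ++ [i])
      ((i + 1) :: (List.replicate (a + 1) i ++ List.replicate b (i + 1))) := by
  induction a with
  | zero => simpa using knuthEquiv_replicate_append_singleton i b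
  | succ a ih =>
    have hmove : KnuthEquiv _ _ := .rel _ _ <|
      KnuthStep.k2 [] (List.replicate a i ++ List.replicate b (i + 1)) i i (i + 1) le_rfl
        (PNat.lt_add_right i 1)
    have hih := ih.append [i] []
    simp only [List.replicate_succ, List.cons_append, List.nil_append,
      List.append_nil] at hmove hih ⊢
    exact .trans _ _ _ hih hmove

/-- The reading word of the two-row tableau with rows `i^m (i+1)^α` and `(i+1)^(n-α)`, where
`m`, `n` count the letters `i`, `i + 1` of `x` and `α = alpha i x`. -/
def knuthNormalForm (i : ℕ+) (x : List ℕ+) : List ℕ+ :=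
  List.replicate (x.count (i + 1) - alpha i x) (i + 1) ++ List.replicate (x.count i) i
    ++ List.replicate (alpha i x) (i + 1)

lemma knuthEquiv_knuthNormalForm {i : ℕ+} {x : List ℕ+}
    (hx : ∀ a ∈ x, a = i ∨ a = i + 1) :
    KnuthEquiv x (knuthNormalForm i x) := by
  induction x using List.reverseRecOn with
  | nil => exact .refl _
  | append_singleton r a ih =>
    have ih := (ih fun b hb => hx b (by simp [hb])).append [] [a]
    simp only [List.nil_append] at ih
    refine .trans _ _ _ ih (show KnuthEquiv _ _ from ?_)
    rcases hx a (by simp) with rfl | rfl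
    · rcases hα : alpha a r with _ | b
      · simpa [knuthNormalForm, alpha_append_self, hα, List.replicate_succ'] using .refl _
      · have hle := hα ▸ alpha_le_count a r
        convert (knuthEquiv_replicate_replicate_append_singleton a (r.count a) b).append
          (List.replicate (r.count (a + 1) - (b + 1)) (a + 1)) [] using 1
        · simp [knuthNormalForm, hα]
        · have hn : r.count (a + 1) - b = r.count (a + 1) - (b + 1) + 1 := by omega
          simp [knuthNormalForm, alpha_append_self, hα, hn, List.replicate_succ']
    · simpa [knuthNormalForm, alpha_append_add_one, List.replicate_succ'] using .refl _

end NormalForm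

section Separation

variable {i : ℕ+}

def twoStepPartition (i : ℕ+) (M d : ℕ) : ℕ+ → ℕ :=
  fun j => if j < i then M else if j = i then d else 0

lemma isPartition_twoStepPartition {M d : ℕ} (h : d ≤ M) :
    IsPartition (twoStepPartition i M d) := by
  refine ⟨fun j => ?_, i + 1, fun j hj => ?_⟩
  · unfold twoStepPartition
    split_ifs <;>
      simp only [← PNat.coe_lt_coe, ← PNat.coe_inj, PNat.add_coe, PNat.val_ofNat] at * <;> omega
  · have h₁ := PNat.lt_add_right i 1
    simp [twoStepPartition, (h₁.trans_le hj).not_gt, (h₁.trans_le hj).ne']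

@[simp] lemma twoStepPartition_self (M d : ℕ) : twoStepPartition i M d i = d := by
  simp [twoStepPartition]

@[simp] lemma twoStepPartition_add_one (M d : ℕ) : twoStepPartition i M d (i + 1) = 0 := by
  simp [twoStepPartition, (PNat.lt_add_right i 1).not_gt]

lemma twoStepPartition_of_eq_add_one {j : ℕ+} (hj : i = j + 1) (M d : ℕ) :
    twoStepPartition i M d j = M := by
  simp [twoStepPartition, hj, PNat.lt_add_right j 1]

lemma alpha_le_and_count_eq_of_schurWord_eq {x y : List ℕ+}
    (hx : ∀ a ∈ x, a = i ∨ a = i + 1) (hy : ∀ a ∈ y, a = i ∨ a = i + 1)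
    (h : ∀ c, IsPartition c → schurWord x c = schurWord y c) :
    alpha i y ≤ alpha i x ∧ x.count i = y.count i ∧ x.count (i + 1) = y.count (i + 1) := by
  set M := alpha i x + x.count i + y.count i
  have hc := isPartition_twoStepPartition (i := i) (show alpha i x ≤ M by omega)
  have hxy := h _ hc
  rw [schurWord_eq_ite hc hx, schurWord_eq_ite hc hy, if_pos] at hxy
  · split_ifs at hxy with hcond
    have hcols := Option.some.inj hxy
    have hi := congrFun hcols i
    have hi₁ := congrFun hcols (i + 1)
    simp only [addToColumns_self, addToColumns_add_one] at hi hi₁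
    simp only [twoStepPartition_self, twoStepPartition_add_one] at hcond hi hi₁
    exact ⟨by omega, by omega, by omega⟩
  · simp only [twoStepPartition_self, twoStepPartition_add_one]
    exact ⟨by omega, fun j hj => by rw [twoStepPartition_of_eq_add_one hj]; omega⟩

end Separation

theorem stmt12 (i : ℕ+) (x y : List ℕ+)
    (hx : ∀ a ∈ x, a = i ∨ a = i + 1) (hy : ∀ a ∈ y, a = i ∨ a = i + 1) :
    (∀ c : ℕ+ → ℕ, IsPartition c → schurWord x c = schurWord y c) ↔
      KnuthEquiv x y := by
  refine ⟨fun h => ?_, fun h c hc => h.schurWord_eq hx hc⟩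
  obtain ⟨hαyx, hcount, hcount₁⟩ := alpha_le_and_count_eq_of_schurWord_eq hx hy h
  obtain ⟨hαxy, -, -⟩ := alpha_le_and_count_eq_of_schurWord_eq hy hx fun c hc => (h c hc).symm
  have hnf : knuthNormalForm i x = knuthNormalForm i y := by
    rw [knuthNormalForm, knuthNormalForm, hcount, hcount₁, le_antisymm hαxy hαyx]
  exact .trans _ _ _ (knuthEquiv_knuthNormalForm hx)
    (hnf ▸ .symm _ _ (knuthEquiv_knuthNormalForm hy))
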